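/- If two one-sided topological Markov shifts (X_A, σ_A) and (X_B, σ_B) (A, B irreducible non-permutation {0,1}-matrices) are coded equivalent, then they are continuously orbit equivalent. -/

import Mathlib

namespace TMS

/-- A `{0,1}` transition matrix on `N` symbols, as a `Bool`-valued function. -/
abbrev Mat (N : ℕ) := Fin N → Fin N → Bool

/-- A finite word is (locally) admissible: all consecutive transitions are allowed. -/
def Adm {N : ℕ} (A : Mat N) (w : List (Fin N)) : Prop :=
  List.IsChain (fun a b => A a b = true) w

instance {N : ℕ} (A : Mat N) (w : List (Fin N)) : Decidable (Adm A w) :=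
  inferInstanceAs (Decidable (List.IsChain _ w))

/-- The one-sided shift space `X_A`. -/
def SSpace {N : ℕ} (A : Mat N) : Set (ℕ → Fin N) :=
  {x | ∀ n, A (x n) (x (n + 1)) = true}

/-- The shift on sequences. -/
def shift {N : ℕ} (x : ℕ → Fin N) : ℕ → Fin N := fun n => x (n + 1)

/-- The shift as a self-map of the shift space. -/
def shiftS {N : ℕ} (A : Mat N) (x : ↥(SSpace A)) : ↥(SSpace A) :=
  ⟨shift x.1, fun n => x.2 (n + 1)⟩

/-- `x` begins with the finite word `w`. -/
def Begins {N : ℕ} (x : ℕ → Fin N) (w : List (Fin N)) : Prop :=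
  ∀ i (h : i < w.length), x i = w.get ⟨i, h⟩

/-- A word belongs to `B_*(X_A)`: it occurs at the beginning of some point of `X_A`. -/
def AdmX {N : ℕ} (A : Mat N) (w : List (Fin N)) : Prop :=
  ∃ x ∈ SSpace A, Begins x w

/-- The cylinder set `U_w ⊂ X_A`. -/
def Cyl {N : ℕ} (A : Mat N) (w : List (Fin N)) : Set (ℕ → Fin N) :=
  {x ∈ SSpace A | Begins x w}

/-- A finite family of words is a prefix code: the words are pairwise distinct and
no word is an initial segment of another. -/
def IsPrefixCode {N M : ℕ} (ω : Fin M → List (Fin N)) : Prop :=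
  Function.Injective ω ∧ ∀ i j : Fin M, i ≠ j → ¬ (ω i <+: ω j)

/-- Starting position of the `n`-th block in the factorization of a point along
the index sequence `f`. -/
def pos {N M : ℕ} (ω : Fin M → List (Fin N)) (f : ℕ → Fin M) : ℕ → ℕ
  | 0 => 0
  | n + 1 => pos ω f n + (ω (f n)).length

/-- The point `x` factors as the infinite concatenation `ω (f 0) ω (f 1) ⋯`. -/
def Factors {N M : ℕ} (ω : Fin M → List (Fin N)) (x : ℕ → Fin N) (f : ℕ → Fin M) : Prop :=
  ∀ n, Begins (fun k => x (pos ω f n + k)) (ω (f n))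

/-- Matrix irreducibility: from any symbol there is an admissible path to any other. -/
def IrreducibleMat {N : ℕ} (A : Mat N) : Prop :=
  ∀ i j : Fin N, ∃ w : List (Fin N), Adm A (i :: (w ++ [j]))

/-- Permutation matrix: every row and every column has exactly one nonzero entry. -/
def IsPermMat {N : ℕ} (A : Mat N) : Prop :=
  (∀ i, ∃! j, A i j = true) ∧ (∀ j, ∃! i, A i j = true)

/-- A right Markov code for `(X_A, σ_A)`: a prefix code of nonempty admissible words
with the unique factorization property, shift invariance, and irreducibility. -/
structure IsRightMarkovCode {N M : ℕ} (A : Mat N) (ω : Fin M → List (Fin N)) : Prop where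
  adm : ∀ i, AdmX A (ω i)
  ne : ∀ i, ω i ≠ []
  prefixCode : IsPrefixCode ω
  uniqueFact : ∀ γ, AdmX A γ → ∃ η, AdmX A (γ ++ η) ∧
      ∃! l : List (Fin M), γ ++ η = (l.map ω).flatten
  shiftInv : ∃ L : ℕ, 0 < L ∧ ∀ l : List (Fin M), l.length = L → AdmX A ((l.map ω).flatten) →
      ∃ l' : List (Fin M), ((l.map ω).flatten).tail = (l'.map ω).flatten
  irr : ∀ i j, ∃ l : List (Fin M), AdmX A (ω i ++ (l.map ω).flatten ++ ω j)

/-- The induced matrix `A(C)`: `A(C)(i,j) = 1` iff `ω i ω j` is admissible. -/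
def matC {N M : ℕ} (A : Mat N) (ω : Fin M → List (Fin N)) : Mat M :=
  fun i j => decide (Adm A (ω i ++ ω j))

/-- Continuous orbit equivalence of one-sided topological Markov shifts. -/
def COE {N N' : ℕ} (A : Mat N) (B : Mat N') : Prop :=
  ∃ h : ↥(SSpace A) ≃ₜ ↥(SSpace B),
    (∃ k₁ l₁ : ↥(SSpace A) → ℕ, Continuous k₁ ∧ Continuous l₁ ∧
      ∀ x, (shiftS B)^[k₁ x] (h (shiftS A x)) = (shiftS B)^[l₁ x] (h x)) ∧
    (∃ k₂ l₂ : ↥(SSpace B) → ℕ, Continuous k₂ ∧ Continuous l₂ ∧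
      ∀ y, (shiftS A)^[k₂ y] (h.symm (shiftS B y)) = (shiftS A)^[l₂ y] (h.symm y))

/-- Elementary coded equivalence. -/
def ElemCodedEq {N N' : ℕ} (A : Mat N) (B : Mat N') : Prop :=
  ∃ (M₁ M₂ : ℕ) (ω₁ : Fin M₁ → List (Fin N)) (ω₂ : Fin M₂ → List (Fin N')),
    IsRightMarkovCode A ω₁ ∧ IsRightMarkovCode B ω₂ ∧
    ∃ h : ↥(SSpace (matC A ω₁)) ≃ₜ ↥(SSpace (matC B ω₂)),
      ∀ y, h (shiftS (matC A ω₁) y) = shiftS (matC B ω₂) (h y)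

/-- A matrix of arbitrary size. -/
abbrev MatS := Σ n : ℕ, Mat n

/-- Irreducible non-permutation condition, bundled. -/
def IrrNP (p : MatS) : Prop := IrreducibleMat p.2 ∧ ¬ IsPermMat p.2

/-- Coded equivalence: a chain of elementary coded equivalences through irreducible
non-permutation matrices. -/
def CodedEq : MatS → MatS → Prop :=
  Relation.ReflTransGen (fun p q => IrrNP p ∧ IrrNP q ∧ ElemCodedEq p.2 q.2)

/-!
For a right Markov code `ω` of `X_A`, concatenating blocks `f ↦ ω (f 0) ω (f 1) ⋯` is a
continuous bijection `π : X_{A(C)} → X_A` (surjective by the factorization property, injective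
by the prefix property), hence a homeomorphism by compactness. It is a continuous orbit
equivalence: `π (σ f) = σ^|ω (f 0)| (π f)`, and by shift invariance the tail of the word formed
by the first `L` blocks of `π⁻¹ x` is again a concatenation `l'` of blocks, so that
`σ^|l'| (π⁻¹ (σ x)) = σ^L (π⁻¹ x)`, where `l'` depends only on the first `L` coordinates of
`π⁻¹ x`. Continuous orbit equivalence is an equivalence relation (the cocycles of a composite
are Birkhoff sums of the cocycles of the factors) containing topological conjugacy, so every
elementary coded equivalence, and hence every coded equivalence, is one.
-/

open Function Filter Topology

theorem _root_.DependsOn.continuous {ι α β : Type*} [TopologicalSpace α] [DiscreteTopology α]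
    [TopologicalSpace β] {F : (ι → α) → β} {s : Set ι} (hF : DependsOn F s) (hs : s.Finite) :
    Continuous F := by
  refine continuous_iff_continuousAt.2 fun f => (continuousAt_const (y := F f)).congr ?_
  have hnear : ∀ᶠ g in 𝓝 f, ∀ i ∈ s, g i = f i := hs.eventually_all.2 fun i _ =>
    tendsto_pure.1 (nhds_discrete α ▸ (continuous_apply i).tendsto f)
  filter_upwards [hnear] with g hg using hF fun i hi => (hg i hi).symm

theorem _root_.Continuous.apply_of_discrete {ι X Z : Type*} [TopologicalSpace ι]
    [DiscreteTopology ι] [TopologicalSpace X] [TopologicalSpace Z] {g : X → ι}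
    {F : ι → X → Z} (hg : Continuous g) (hF : ∀ i, Continuous (F i)) :
    Continuous fun x => F (g x) x :=
  (continuous_prod_of_discrete_left (f := fun p : ι × X => F p.1 p.2) |>.2 hF).comp
    (hg.prodMk continuous_id)

section OrbitCocycles

variable {X Y Z : Type*}

def HasOrbitCocycles [TopologicalSpace X] (S : X → X) (T : Y → Y) (h : X → Y) : Prop :=
  ∃ k l : X → ℕ, Continuous k ∧ Continuous l ∧ ∀ x, T^[k x] (h (S x)) = T^[l x] (h x)

theorem iterate_birkhoffSum {S : X → X} {T : Y → Y} {h : X → Y} {k l : X → ℕ}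
    (H : ∀ x, T^[k x] (h (S x)) = T^[l x] (h x)) (n : ℕ) (x : X) :
    T^[birkhoffSum S k n x] (h (S^[n] x)) = T^[birkhoffSum S l n x] (h x) := by
  induction n generalizing x with
  | zero => rfl
  | succ n ih =>
    rw [birkhoffSum_succ', birkhoffSum_succ', iterate_succ_apply, iterate_add_apply, ih,
      ← iterate_add_apply, add_comm, iterate_add_apply, H, ← iterate_add_apply, add_comm]

theorem continuous_birkhoffSum [TopologicalSpace X] {S : X → X} {k : X → ℕ}
    (hS : Continuous S) (hk : Continuous k) (n : ℕ) : Continuous (birkhoffSum S k n) :=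
  continuous_finsetSum _ fun i _ => hk.comp (hS.iterate i)

theorem HasOrbitCocycles.of_semiconj [TopologicalSpace X] {S : X → X} {T : Y → Y} {h : X → Y}
    (hh : Semiconj h S T) : HasOrbitCocycles S T h :=
  ⟨fun _ => 0, fun _ => 1, continuous_const, continuous_const, hh⟩

/-- The cocycles of `g ∘ f` are Birkhoff sums of those of `g` along the orbit segments
given by the cocycles of `f`. -/
theorem HasOrbitCocycles.comp [TopologicalSpace X] [TopologicalSpace Y] {S : X → X}
    {T : Y → Y} {U : Z → Z} {f : X → Y} {g : Y → Z} (hg : HasOrbitCocycles T U g)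
    (hf : HasOrbitCocycles S T f) (hS : Continuous S) (hT : Continuous T)
    (hfc : Continuous f) : HasOrbitCocycles S U (g ∘ f) := by
  obtain ⟨k, l, hk, hl, H⟩ := hf
  obtain ⟨k', l', hk', hl', H'⟩ := hg
  have hcont {c : Y → ℕ} (hc : Continuous c) {m : X → ℕ} (hm : Continuous m) {p : X → Y}
      (hp : Continuous p) : Continuous fun x => birkhoffSum T c (m x) (p x) :=
    hm.apply_of_discrete fun n => (continuous_birkhoffSum hT hc n).comp hp
  refine ⟨fun x => birkhoffSum T l' (k x) (f (S x)) + birkhoffSum T k' (l x) (f x),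
    fun x => birkhoffSum T k' (k x) (f (S x)) + birkhoffSum T l' (l x) (f x),
    (hcont hl' hk (hfc.comp hS)).add (hcont hk' hl hfc),
    (hcont hk' hk (hfc.comp hS)).add (hcont hl' hl hfc), fun x => ?_⟩
  have hS' := iterate_birkhoffSum H' (k x) (f (S x))
  have h' := iterate_birkhoffSum H' (l x) (f x)
  rw [H] at hS'
  simp only [comp_apply]
  rw [add_comm, iterate_add_apply, ← hS', ← iterate_add_apply, add_comm, iterate_add_apply, h',
    ← iterate_add_apply]

end OrbitCocycles

section ContinuousOrbitEquivalence

variable {N₁ N₂ N₃ : ℕ} {A : Mat N₁} {B : Mat N₂} {C : Mat N₃}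

theorem coe_iff : COE A B ↔ ∃ h : SSpace A ≃ₜ SSpace B,
    HasOrbitCocycles (shiftS A) (shiftS B) h ∧ HasOrbitCocycles (shiftS B) (shiftS A) h.symm :=
  Iff.rfl

theorem continuous_shiftS (A : Mat N₁) : Continuous (shiftS A) :=
  Continuous.subtype_mk (f := fun x : SSpace A => shift x.1)
    (continuous_pi fun n => (continuous_apply (n + 1)).comp continuous_subtype_val) _

theorem COE.of_semiconj (h : SSpace A ≃ₜ SSpace B) (hh : Semiconj h (shiftS A) (shiftS B)) :
    COE A B :=
  coe_iff.2 ⟨h, .of_semiconj hh, .of_semiconj (hh.inverse_left h.left_inv h.right_inv)⟩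

theorem COE.refl (A : Mat N₁) : COE A A :=
  .of_semiconj (.refl _) fun _ => rfl

theorem COE.symm (hAB : COE A B) : COE B A := by
  obtain ⟨h, h₁, h₂⟩ := coe_iff.1 hAB
  exact coe_iff.2 ⟨h.symm, h₂, h₁⟩

theorem COE.trans (hAB : COE A B) (hBC : COE B C) : COE A C := by
  obtain ⟨h, h₁, h₂⟩ := coe_iff.1 hAB
  obtain ⟨h', h₁', h₂'⟩ := coe_iff.1 hBC
  exact coe_iff.2 ⟨h.trans h',
    h₁'.comp h₁ (continuous_shiftS A) (continuous_shiftS B) h.continuous,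
    h₂.comp h₂' (continuous_shiftS C) (continuous_shiftS B) h'.symm.continuous⟩

end ContinuousOrbitEquivalence

section Words

-- Points are handled as `Stream'`s, definitionally `ℕ → Fin N`, to use `++ₛ`, `take`, `drop`.
variable {N : ℕ} {A : Mat N} {x y : Stream' (Fin N)} {u v w : List (Fin N)}

theorem dependsOn_take {α : Type*} (n : ℕ) :
    DependsOn (Stream'.take n : Stream' α → List α) (Set.Iio n) := fun (f g : Stream' α) h =>
  List.ext_getElem (by simp) fun i hi _ => by
    simp only [Stream'.length_take] at hi
    simp only [Stream'.take_get]
    exact h i hi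

theorem begins_append_stream (w : List (Fin N)) (y : Stream' (Fin N)) : Begins (w ++ₛ y) w :=
  fun _ hi => Stream'.get_append_left _ _ _ hi

theorem begins_take (x : Stream' (Fin N)) (n : ℕ) : Begins x (Stream'.take n x) := by
  simpa only [Stream'.append_take_drop] using begins_append_stream (Stream'.take n x) (x.drop n)

theorem Begins.eq_append_stream (hw : Begins x w) : x = w ++ₛ Stream'.drop w.length x := by
  funext i
  rcases lt_or_ge i w.length with hi | hi
  · exact (hw i hi).trans (Stream'.get_append_left _ _ _ hi).symm
  · obtain ⟨j, rfl⟩ := Nat.exists_eq_add_of_le hi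
    change _ = Stream'.get _ _
    rw [Stream'.get_append_right, Stream'.get_drop]
    rfl

theorem Begins.take_eq (hw : Begins x w) : Stream'.take w.length x = w := by
  rw [hw.eq_append_stream, Stream'.take_append_of_le_length _ _ _ le_rfl, List.take_length]

theorem Begins.append_stream (hv : Begins y v) (u : List (Fin N)) :
    Begins (u ++ₛ y) (u ++ v) := by
  rw [hv.eq_append_stream, ← Stream'.append_append_stream]
  exact begins_append_stream _ _

theorem Begins.of_prefix (hv : Begins x v) (h : u <+: v) : Begins x u := fun i hi =>
  (hv i (hi.trans_le h.length_le)).trans (h.getElem hi).symm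

theorem Begins.prefix_of_length_le (hu : Begins x u) (hv : Begins x v)
    (h : u.length ≤ v.length) : u <+: v := by
  rw [← hu.take_eq, ← hv.take_eq]
  exact Stream'.take_prefix_take_left _ _ x h

theorem Begins.adm (hx : x ∈ SSpace A) (hw : Begins x w) : Adm A w :=
  List.isChain_iff_getElem.2 fun i hi => by
    have h₁ := hw i (by omega)
    have h₂ := hw (i + 1) hi
    simp only [List.get_eq_getElem] at h₁ h₂
    rw [← h₁, ← h₂]
    exact hx i

theorem mem_sspace_of_begins_adm (h : ∀ n, ∃ w, n ≤ w.length ∧ Begins x w ∧ Adm A w) :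
    x ∈ SSpace A := fun k => by
  obtain ⟨w, hlen, hw, hadm⟩ := h (k + 2)
  rw [hw k (by omega), hw (k + 1) (by omega)]
  exact List.isChain_iff_getElem.1 hadm k (by omega)

theorem drop_mem_sspace (hx : x ∈ SSpace A) (n : ℕ) : Stream'.drop n x ∈ SSpace A :=
  fun k => by
    change A (x (k + n)) (x (k + 1 + n)) = true
    rw [Nat.add_right_comm]
    exact hx (k + n)

theorem isClosed_sspace (A : Mat N) : IsClosed (SSpace A) := by
  simp only [SSpace, Set.ofPred_forall]
  refine isClosed_iInter fun n => isClosed_eq (DependsOn.continuous (s := {n, n + 1}) ?_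
    (Set.toFinite _)) continuous_const
  intro x y h
  simp only [h n (by simp), h (n + 1) (by simp)]

theorem coe_iterate_shiftS (x : SSpace A) (n : ℕ) :
    ((shiftS A)^[n] x : ℕ → Fin N) = Stream'.drop n (x : ℕ → Fin N) := by
  induction n with
  | zero => rfl
  | succ n ih =>
    rw [iterate_succ_apply']
    exact (congrArg Stream'.tail ih).trans Stream'.tail_drop'

end Words

section Code

variable {N M : ℕ} {A : Mat N} {ω : Fin M → List (Fin N)}

theorem length_le_length_flatten_map (hne : ∀ i, ω i ≠ []) (l : List (Fin M)) :
    l.length ≤ (l.map ω).flatten.length := by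
  induction l with
  | nil => simp
  | cons a l ih =>
    have := List.length_pos_iff.2 (hne a)
    simp only [List.map_cons, List.flatten_cons, List.length_append, List.length_cons]
    omega

theorem flatten_map_take_prefix (f : Stream' (Fin M)) {m n : ℕ} (h : m ≤ n) :
    ((Stream'.take m f).map ω).flatten <+: ((Stream'.take n f).map ω).flatten :=
  ((Stream'.take_prefix_take_left _ _ f h).map ω).flatten

/-- The infinite concatenation `ω (f 0) ω (f 1) ⋯`: its `k`-th letter is read off the first
`k + 1` blocks, which contain at least `k + 1` letters. -/
def concat (hne : ∀ i, ω i ≠ []) (f : Stream' (Fin M)) : Stream' (Fin N) := fun k =>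
  ((Stream'.take (k + 1) f).map ω).flatten[k]'(by
    have := length_le_length_flatten_map hne (Stream'.take (k + 1) f)
    rw [Stream'.length_take] at this
    omega)

theorem IsPrefixCode.eq_of_begins (hpc : IsPrefixCode ω) {x : Stream' (Fin N)} {i j : Fin M}
    (hi : Begins x (ω i)) (hj : Begins x (ω j)) : i = j := by
  by_contra hij
  rcases le_total (ω i).length (ω j).length with h | h
  · exact hpc.2 i j hij (hi.prefix_of_length_le hj h)
  · exact hpc.2 j i (Ne.symm hij) (hj.prefix_of_length_le hi h)

theorem IsRightMarkovCode.exists_begins (hω : IsRightMarkovCode A ω) {x : Stream' (Fin N)}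
    (hx : x ∈ SSpace A) : ∃ i, Begins x (ω i) := by
  set n := Finset.univ.sup fun i => (ω i).length
  obtain ⟨η, -, l, hl, -⟩ := hω.uniqueFact (Stream'.take (n + 1) x) ⟨x, hx, begins_take x _⟩
  cases l with
  | nil => simpa using congrArg List.length hl
  | cons i l =>
    refine ⟨i, (begins_take x (n + 1)).of_prefix
      (List.prefix_of_prefix_length_le ?_ (List.prefix_append _ η) ?_)⟩
    · rw [hl, List.map_cons, List.flatten_cons]
      exact List.prefix_append _ _
    · rw [Stream'.length_take]
      exact (Finset.le_sup (f := fun i => (ω i).length) (Finset.mem_univ i)).trans n.le_succ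

theorem adm_flatten_map_take (hne : ∀ i, ω i ≠ []) {f : Stream' (Fin M)}
    (hf : f ∈ SSpace (matC A ω)) (n : ℕ) :
    Adm A ((Stream'.take n f).map ω).flatten := by
  induction n generalizing f with
  | zero => exact List.IsChain.nil
  | succ n ih =>
    have hjoin : Adm A (ω (f 0) ++ ω (f 1)) := of_decide_eq_true (hf 0)
    rw [Stream'.take_succ, List.map_cons, List.flatten_cons]
    cases n with
    | zero =>
      rw [Stream'.take_zero, List.map_nil, List.flatten_nil, List.append_nil]
      exact hjoin.left_of_append
    | succ n =>
      have htail := ih (f := f.tail) fun k => hf (k + 1)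
      rw [Stream'.take_succ, List.map_cons, List.flatten_cons] at htail
      rw [Stream'.take_succ, List.map_cons, List.flatten_cons, ← List.append_assoc]
      exact hjoin.append_overlap htail (hne _)

variable (hne : ∀ i, ω i ≠ [])

theorem begins_concat (f : Stream' (Fin M)) (n : ℕ) :
    Begins (concat hne f) ((Stream'.take n f).map ω).flatten := by
  intro i hi
  simp only [concat, List.get_eq_getElem]
  rcases le_total (i + 1) n with h | h
  · exact (flatten_map_take_prefix f h).getElem _
  · exact ((flatten_map_take_prefix f h).getElem hi).symm

theorem eq_concat_of_begins {f : Stream' (Fin M)} {x : Stream' (Fin N)}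
    (h : ∀ n, Begins x ((Stream'.take n f).map ω).flatten) : x = concat hne f :=
  funext fun k => h (k + 1) k _

theorem concat_append (l : List (Fin M)) (f : Stream' (Fin M)) :
    concat hne (l ++ₛ f) = (l.map ω).flatten ++ₛ concat hne f := by
  refine (eq_concat_of_begins hne fun n => ?_).symm
  refine Begins.of_prefix ?_ (flatten_map_take_prefix _ (Nat.le_add_left n l.length))
  rw [← Stream'.append_take, List.map_append, List.flatten_append]
  exact (begins_concat hne f n).append_stream _

theorem concat_cons (f : Stream' (Fin M)) :
    concat hne f = ω (f.head) ++ₛ concat hne f.tail := by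
  have h := concat_append hne [f.head] f.tail
  rwa [Stream'.append_stream_head_tail, List.map_singleton, List.flatten_singleton] at h

theorem tail_concat_eq {f : Stream' (Fin M)} {L : ℕ} (hL : 0 < L)
    {l : List (Fin M)} (hl : ((Stream'.take L f).map ω).flatten.tail = (l.map ω).flatten) :
    (concat hne f).tail = concat hne (l ++ₛ f.drop L) := by
  obtain ⟨L, rfl⟩ := Nat.exists_eq_add_one_of_ne_zero hL.ne'
  conv_lhs => rw [← Stream'.append_take_drop (L + 1) f]
  rw [concat_append, Stream'.take_succ, List.map_cons, List.flatten_cons] at *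
  obtain ⟨a, w, hw⟩ := List.exists_cons_of_ne_nil (hne f.head)
  rw [hw, List.cons_append, List.tail_cons] at hl
  rw [hw, List.cons_append, Stream'.cons_append_stream, Stream'.tail_cons, hl, concat_append]

theorem concat_injective (hpc : IsPrefixCode ω) : Injective (concat hne) := by
  have hstep : ∀ f g, concat hne f = concat hne g →
      f.head = g.head ∧ concat hne f.tail = concat hne g.tail := by
    intro f g h
    rw [concat_cons hne f, concat_cons hne g] at h
    have h₀ : f.head = g.head :=
      hpc.eq_of_begins (h ▸ begins_append_stream _ _) (begins_append_stream _ _)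
    rw [h₀] at h
    exact ⟨h₀, (Stream'.append_right_inj _ _ _).1 h⟩
  intro f g h
  funext n
  induction n generalizing f g with
  | zero => exact (hstep f g h).1
  | succ n ih => exact ih (hstep f g h).2

theorem concat_mem {f : Stream' (Fin M)} (hf : f ∈ SSpace (matC A ω)) :
    concat hne f ∈ SSpace A :=
  mem_sspace_of_begins_adm fun n => ⟨_,
    by simpa using length_le_length_flatten_map hne (Stream'.take n f),
    begins_concat hne f n, adm_flatten_map_take hne hf n⟩

theorem continuous_concat : Continuous fun (f : ℕ → Fin M) (k : ℕ) => concat hne f k := by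
  refine continuous_pi fun k =>
    DependsOn.continuous (s := Set.Iio (k + 1)) (fun (f g : Stream' (Fin M)) h => ?_)
      (Set.finite_Iio _)
  simp only [concat, dependsOn_take (k + 1) h]

end Code

theorem IsRightMarkovCode.exists_concat_eq {N M : ℕ} {A : Mat N} {ω : Fin M → List (Fin N)}
    (hω : IsRightMarkovCode A ω) {x : Stream' (Fin N)} (hx : x ∈ SSpace A) :
    ∃ f ∈ SSpace (matC A ω), concat hω.ne f = x := by
  let X := {x : Stream' (Fin N) // x ∈ SSpace A}
  have hsplit : ∀ x : X, ∃ i, ∃ x' : X, x.1 = ω i ++ₛ x'.1 := fun x =>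
    let ⟨i, hi⟩ := hω.exists_begins x.2
    ⟨i, ⟨_, drop_mem_sspace x.2 _⟩, hi.eq_append_stream⟩
  choose first rest hrest using hsplit
  let blocks : X → Stream' (Fin M) := fun x n => first (rest^[n] x)
  have hblocks (n : ℕ) : ∀ x,
      x.1 = ((Stream'.take n (blocks x)).map ω).flatten ++ₛ (rest^[n] x).1 := by
    induction n with
    | zero => exact fun _ => rfl
    | succ n ih =>
      intro x
      rw [Stream'.take_succ, List.map_cons, List.flatten_cons, Stream'.append_append_stream]
      exact (hrest x).trans (congrArg _ (ih (rest x)))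
  have hpair (y : X) : Begins y.1 (ω (first y) ++ ω (first (rest y))) := by
    rw [hrest y, hrest (rest y), ← Stream'.append_append_stream]
    exact begins_append_stream _ _
  refine ⟨blocks ⟨x, hx⟩, fun n => decide_eq_true ?_,
    (eq_concat_of_begins _ fun n => ?_).symm⟩
  · have hadm := (hpair (rest^[n] ⟨x, hx⟩)).adm (rest^[n] ⟨x, hx⟩).2
    rwa [← iterate_succ_apply' rest] at hadm
  · have h := begins_append_stream ((Stream'.take n (blocks ⟨x, hx⟩)).map ω).flatten
      (rest^[n] ⟨x, hx⟩).1
    rwa [← hblocks] at h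

section CodeHomeomorph

variable {N M : ℕ} {A : Mat N} {ω : Fin M → List (Fin N)}

noncomputable def concatHomeomorph (hω : IsRightMarkovCode A ω) :
    SSpace (matC A ω) ≃ₜ SSpace A :=
  haveI : CompactSpace (SSpace (matC A ω)) :=
    isCompact_iff_compactSpace.1 (isClosed_sspace _).isCompact
  Continuous.homeoOfEquivCompactToT2
    (f := Equiv.ofBijective (fun f => ⟨concat hω.ne f.1, concat_mem hω.ne f.2⟩)
      ⟨fun _ _ h => Subtype.ext (concat_injective hω.ne hω.prefixCode (congrArg Subtype.val h)),
        fun x => let ⟨f, hf, hfx⟩ := hω.exists_concat_eq x.2; ⟨⟨f, hf⟩, Subtype.ext hfx⟩⟩)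
    (((continuous_concat hω.ne).comp continuous_subtype_val).subtype_mk _)

variable (hω : IsRightMarkovCode A ω)

theorem coe_concatHomeomorph (f : SSpace (matC A ω)) :
    (concatHomeomorph hω f).1 = concat hω.ne f.1 :=
  rfl

theorem concat_concatHomeomorph_symm (x : SSpace A) :
    concat hω.ne ((concatHomeomorph hω).symm x).1 = x.1 :=
  congrArg Subtype.val ((concatHomeomorph hω).apply_symm_apply x)

theorem concatHomeomorph_shiftS (f : SSpace (matC A ω)) :
    concatHomeomorph hω (shiftS _ f) =
      (shiftS A)^[(ω (f.1 0)).length] (concatHomeomorph hω f) := by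
  apply Subtype.ext
  rw [coe_iterate_shiftS, coe_concatHomeomorph, coe_concatHomeomorph, concat_cons hω.ne f.1]
  exact (Stream'.drop_append_stream _ _).symm

theorem iterate_shiftS_concatHomeomorph_symm {L : ℕ} (hL : 0 < L) (x : SSpace A)
    {l : List (Fin M)}
    (hl : ((Stream'.take L ((concatHomeomorph hω).symm x).1).map ω).flatten.tail =
      (l.map ω).flatten) :
    (shiftS _)^[l.length] ((concatHomeomorph hω).symm (shiftS A x)) =
      (shiftS _)^[L] ((concatHomeomorph hω).symm x) := by
  have hσx : ((concatHomeomorph hω).symm (shiftS A x)).1 =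
      l ++ₛ Stream'.drop L ((concatHomeomorph hω).symm x).1 := by
    refine concat_injective hω.ne hω.prefixCode ?_
    rw [concat_concatHomeomorph_symm, ← tail_concat_eq hω.ne hL hl,
      concat_concatHomeomorph_symm]
    rfl
  apply Subtype.ext
  rw [coe_iterate_shiftS, coe_iterate_shiftS, hσx]
  exact Stream'.drop_append_stream _ _

end CodeHomeomorph

theorem IsRightMarkovCode.coe_matC {N M : ℕ} {A : Mat N} {ω : Fin M → List (Fin N)}
    (hω : IsRightMarkovCode A ω) : COE A (matC A ω) := by
  obtain ⟨L, hL, hshift⟩ := hω.shiftInv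
  choose! tailBlocks htailBlocks using hshift
  set π := concatHomeomorph hω
  refine (coe_iff.2 ⟨π, ?_, ?_⟩).symm
  · exact ⟨fun _ => 0, fun f => (ω (f.1 0)).length, continuous_const,
      (continuous_of_discreteTopology (f := fun i : Fin M => (ω i).length)).comp
        ((continuous_apply 0).comp continuous_subtype_val),
      concatHomeomorph_shiftS hω⟩
  refine ⟨fun x => (tailBlocks (Stream'.take L (π.symm x).1)).length, fun _ => L, ?_,
    continuous_const, fun x => ?_⟩
  · refine (DependsOn.continuous (s := Set.Iio L)
      (F := fun f : ℕ → Fin M => (tailBlocks (Stream'.take L f)).length)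
      (fun (f g : Stream' (Fin M)) h => ?_)
      (Set.finite_Iio L)).comp (continuous_subtype_val.comp π.symm.continuous)
    simp only [dependsOn_take L h]
  · refine iterate_shiftS_concatHomeomorph_symm hω hL x (htailBlocks _ (Stream'.length_take _ _)
      ⟨x.1, x.2, ?_⟩)
    rw [← concat_concatHomeomorph_symm hω x]
    exact begins_concat _ _ _

theorem ElemCodedEq.coe {N N' : ℕ} {A : Mat N} {B : Mat N'} (h : ElemCodedEq A B) :
    COE A B := by
  obtain ⟨M₁, M₂, ω₁, ω₂, h₁, h₂, φ, hφ⟩ := h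
  exact h₁.coe_matC.trans ((COE.of_semiconj φ hφ).trans h₂.coe_matC.symm)

theorem codedEq_implies_COE_general {N N' : ℕ} (A : Mat N) (B : Mat N')
    (h : CodedEq ⟨N, A⟩ ⟨N', B⟩) : COE A B := by
  suffices ∀ q : MatS, CodedEq ⟨N, A⟩ q → COE A q.2 from this _ h
  intro q hq
  induction hq with
  | refl => exact COE.refl A
  | tail _ hstep ih => exact ih.trans hstep.2.2.coe

/-- Coded equivalence implies continuous orbit equivalence. -/
theorem codedEq_implies_COE {N N' : ℕ} (A : Mat N) (B : Mat N')
    (hA : IrreducibleMat A) (hAp : ¬ IsPermMat A)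
    (hB : IrreducibleMat B) (hBp : ¬ IsPermMat B)
    (h : CodedEq ⟨N, A⟩ ⟨N', B⟩) : COE A B :=
  codedEq_implies_COE_general A B h

end TMS
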